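/- arXiv:2012.02134 — 4 statements merged into one kernel-verified Lean document; each statement's English description precedes it below -/
import Mathlib

section
/- Let (y_i)_{i=1}^n be points in ℝ^d, and suppose each y_i lies in an assigned set T_i ⊆ ℝ^d (its Delaunay triangle) with diam(T_i) ≤ R. Define a simple graph G on {1,…,n} by joining distinct i and j whenever T_i = T_j or T_i ∩ T_j ≠ ∅. Let {1,…,n} be partitioned into two nonempty clusters C₁ and C₂, and let Δ = min_{i ∈ C₁, j ∈ C₂} ‖y_i − y_j‖. If the subgraphs of G induced on C₁ and on C₂ are each connected (each cluster is Delaunay-connected) and Δ > 2R, then there is no edge of G between C₁ and C₂, and the connected components of G are exactly C₁ and C₂. -/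
set_option maxHeartbeats 1000000


/-- Points `y i` in ℝ^d each lie in an assigned set `T i` (its Delaunay
triangle) of diameter at most `R` (encoded as `∀ u v ∈ T i, dist u v ≤ R`).  The graph `G`
joins distinct `i, j` iff `T i = T j` or `T i ∩ T j ≠ ∅`.  If `{1,…,n}` is partitioned into
nonempty clusters `C₁, C₂` whose induced subgraphs are connected, and the minimum
inter-cluster distance exceeds `2R`, then there is no edge between the clusters, and the
connected components of `G` are exactly `C₁` and `C₂`. -/
theorem kds_delaunay_two_cluster_components
    {d n : ℕ} (y : Fin n → EuclideanSpace ℝ (Fin d))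
    (T : Fin n → Set (EuclideanSpace ℝ (Fin d))) (R : ℝ)
    (hyT : ∀ i, y i ∈ T i)
    (hdiam : ∀ i, ∀ u ∈ T i, ∀ v ∈ T i, dist u v ≤ R)
    (G : SimpleGraph (Fin n))
    (hG : ∀ i j, G.Adj i j ↔ i ≠ j ∧ (T i = T j ∨ (T i ∩ T j).Nonempty))
    (C₁ C₂ : Set (Fin n)) (hC₁ : C₁.Nonempty) (hC₂ : C₂.Nonempty)
    (hdisj : Disjoint C₁ C₂) (hcover : C₁ ∪ C₂ = Set.univ)
    (hconn₁ : (G.induce C₁).Connected) (hconn₂ : (G.induce C₂).Connected)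
    (hΔ : ∀ i ∈ C₁, ∀ j ∈ C₂, 2 * R < dist (y i) (y j)) :
    (∀ i ∈ C₁, ∀ j ∈ C₂, ¬ G.Adj i j) ∧
      (∀ i j : Fin n, G.Reachable i j ↔ ((i ∈ C₁ ∧ j ∈ C₁) ∨ (i ∈ C₂ ∧ j ∈ C₂))) := by

  -- adjacency implies distance ≤ 2R
  obtain ⟨i0, -⟩ := hC₁
  have hRnn : 0 ≤ R := le_trans dist_nonneg (hdiam i0 _ (hyT i0) _ (hyT i0))
  have hdist : ∀ i j, G.Adj i j → dist (y i) (y j) ≤ 2 * R := by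
    intro i j hij
    rcases (hG i j).1 hij with ⟨-, heq | ⟨z, hzi, hzj⟩⟩
    · have := hdiam i _ (hyT i) (y j) (by rw [heq]; exact hyT j)
      linarith
    · calc dist (y i) (y j) ≤ dist (y i) z + dist z (y j) := dist_triangle _ _ _
        _ ≤ R + R := add_le_add (hdiam i _ (hyT i) _ hzi)
            (by rw [dist_comm]; exact hdiam j _ (hyT j) _ hzj)
        _ = 2 * R := by ring
  have noedge : ∀ i ∈ C₁, ∀ j ∈ C₂, ¬ G.Adj i j := by
    intro i hi j hj hadj
    exact absurd (hdist i j hadj) (not_le.2 (hΔ i hi j hj))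
  -- membership decided along edges
  have step : ∀ i j, G.Adj i j → (i ∈ C₁ ↔ j ∈ C₁) := by
    intro i j hij
    have hj' : j ∈ C₁ ∪ C₂ := hcover ▸ Set.mem_univ j
    have hi' : i ∈ C₁ ∪ C₂ := hcover ▸ Set.mem_univ i
    constructor
    · intro hi
      rcases hj' with hj | hj
      · exact hj
      · exact absurd hij (noedge i hi j hj)
    · intro hj
      rcases hi' with hi | hi
      · exact hi
      · exact absurd hij.symm (noedge j hj i hi)
  have walkC₁ : ∀ i j : Fin n, G.Reachable i j → (i ∈ C₁ ↔ j ∈ C₁) := by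
    intro i j ⟨w⟩
    induction w with
    | nil => rfl
    | cons h p ih => exact (step _ _ h).trans ih
  -- reachability within a cluster
  have reachIn : ∀ (C : Set (Fin n)), (G.induce C).Connected →
      ∀ i ∈ C, ∀ j ∈ C, G.Reachable i j := by
    intro C hconn i hi j hj
    have h := hconn ⟨i, hi⟩ ⟨j, hj⟩
    rcases h with ⟨w⟩
    have : G.Reachable ((⟨i, hi⟩ : C) : Fin n) ((⟨j, hj⟩ : C) : Fin n) := by
      exact ⟨w.map (SimpleGraph.Embedding.induce C).toHom⟩
    exact this
  refine ⟨noedge, fun i j => ?_⟩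
  have hi' : i ∈ C₁ ∪ C₂ := hcover ▸ Set.mem_univ i
  have hj' : j ∈ C₁ ∪ C₂ := hcover ▸ Set.mem_univ j
  constructor
  · intro hr
    rcases hi' with hi | hi
    · exact Or.inl ⟨hi, (walkC₁ i j hr).1 hi⟩
    · rcases hj' with hj | hj
      · exact absurd ((walkC₁ i j hr).2 hj) (fun h => hdisj.le_bot ⟨h, hi⟩)
      · exact Or.inr ⟨hi, hj⟩
  · rintro (⟨hi, hj⟩ | ⟨hi, hj⟩)
    · exact reachIn C₁ hconn₁ i hi j hj
    · exact reachIn C₂ hconn₂ i hi j hj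
end

section
/- Let (y_i)_{i=1}^n be points in ℝ^d, each lying in an assigned set T_i ⊆ ℝ^d with diam(T_i) ≤ R, and let G be the simple graph on {1,…,n} joining distinct i and j whenever T_i = T_j or T_i ∩ T_j ≠ ∅. Suppose {1,…,n} is partitioned into nonempty clusters C₁ and C₂ with min_{i ∈ C₁, j ∈ C₂} ‖y_i − y_j‖ > 2R, and the subgraphs induced on C₁ and on C₂ are each connected. Then the kernel of the graph Laplacian matrix L = D − A of G (where A is the 0/1 adjacency matrix and D the diagonal degree matrix) is two-dimensional; equivalently, G has exactly two connected components. -/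
open scoped Classical

/-!
Triangles that meet carry points at distance at most `2 * R`, so the separation hypothesis forbids
every edge between `C₁` and `C₂ = C₁ᶜ`. With both clusters connected, the connected components
of `G` are exactly `C₁` and `C₂`, and the kernel of `D - A = G.lapMatrix ℝ` has one dimension per
component.
-/

theorem dist_le_two_mul_of_inter_nonempty {α : Type*} [PseudoMetricSpace α] {S S' : Set α}
    {R : ℝ} {x x' : α} (hS : ∀ u ∈ S, ∀ v ∈ S, dist u v ≤ R)
    (hS' : ∀ u ∈ S', ∀ v ∈ S', dist u v ≤ R) (hx : x ∈ S) (hx' : x' ∈ S')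
    (h : (S ∩ S').Nonempty) : dist x x' ≤ 2 * R := by
  obtain ⟨z, hzS, hzS'⟩ := h
  calc dist x x' ≤ dist x z + dist z x' := dist_triangle x z x'
    _ ≤ R + R := add_le_add (hS x hx z hzS) (hS' z hzS' x' hx')
    _ = 2 * R := (two_mul R).symm

namespace SimpleGraph

variable {V : Type*} {G : SimpleGraph V}

theorem Connected.reachable_of_induce {s : Set V} (hs : (G.induce s).Connected) {u v : V}
    (hu : u ∈ s) (hv : v ∈ s) : G.Reachable u v :=
  (hs.preconnected ⟨u, hu⟩ ⟨v, hv⟩).map (Embedding.induce s).toHom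

theorem not_reachable_of_forall_not_adj {s : Set V} (hcut : ∀ u ∈ s, ∀ v ∉ s, ¬G.Adj u v)
    {u v : V} (hu : u ∈ s) (hv : v ∉ s) : ¬G.Reachable u v := by
  rintro ⟨p⟩
  obtain ⟨d, -, hd, hd'⟩ := p.exists_boundary_dart s hu hv
  exact hcut _ hd _ hd' d.adj

theorem card_connectedComponent_eq_two {s : Set V} (hs : (G.induce s).Connected)
    (hsc : (G.induce sᶜ).Connected) (hcut : ∀ u ∈ s, ∀ v ∉ s, ¬G.Adj u v) :
    Nat.card G.ConnectedComponent = 2 := by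
  obtain ⟨⟨a, ha⟩⟩ := hs.nonempty
  obtain ⟨⟨b, hb⟩⟩ := hsc.nonempty
  refine Nat.card_eq_two_iff.2 ⟨G.connectedComponentMk a, G.connectedComponentMk b,
    fun hab => not_reachable_of_forall_not_adj hcut ha hb (ConnectedComponent.eq.1 hab), ?_⟩
  refine Set.eq_univ_of_forall fun c => c.ind fun k => ?_
  by_cases hk : k ∈ s
  · exact Or.inl (ConnectedComponent.sound (hs.reachable_of_induce hk ha))
  · exact Or.inr (ConnectedComponent.sound (hsc.reachable_of_induce hk hb))

theorem diagonal_sum_adjMatrix_sub_adjMatrix {R : Type*} [Fintype V] [DecidableEq V]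
    [DecidableRel G.Adj] [NonAssocRing R] :
    Matrix.diagonal (fun i => ∑ j, G.adjMatrix R i j) - G.adjMatrix R = G.lapMatrix R := by
  have hdeg : (fun i => ∑ j, G.adjMatrix R i j) = fun i => (G.degree i : R) := by
    ext i
    simp [Finset.sum_boole, degree, neighborFinset_eq_filter]
  rw [hdeg]
  rfl

end SimpleGraph

theorem kds_delaunay_laplacian_kernel_dim_two_general
    {d n : ℕ} (y : Fin n → EuclideanSpace ℝ (Fin d))
    (T : Fin n → Set (EuclideanSpace ℝ (Fin d))) (R : ℝ)
    (hyT : ∀ i, y i ∈ T i)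
    (hdiam : ∀ i, ∀ u ∈ T i, ∀ v ∈ T i, dist u v ≤ R)
    (G : SimpleGraph (Fin n))
    (hG : ∀ i j, G.Adj i j ↔ i ≠ j ∧ (T i = T j ∨ (T i ∩ T j).Nonempty))
    (C₁ C₂ : Set (Fin n))
    (hdisj : Disjoint C₁ C₂) (hcover : C₁ ∪ C₂ = Set.univ)
    (hconn₁ : (G.induce C₁).Connected) (hconn₂ : (G.induce C₂).Connected)
    (hΔ : ∀ i ∈ C₁, ∀ j ∈ C₂, 2 * R < dist (y i) (y j))
    (A : Matrix (Fin n) (Fin n) ℝ)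
    (hA : ∀ i j, A i j = if G.Adj i j then 1 else 0)
    (D : Matrix (Fin n) (Fin n) ℝ)
    (hD : D = Matrix.diagonal fun i => ∑ j, A i j) :
    Module.finrank ℝ (LinearMap.ker (Matrix.toLin' (D - A))) = 2 ∧
      Nat.card G.ConnectedComponent = 2 := by
  obtain rfl : C₁ᶜ = C₂ := (IsCompl.of_eq hdisj.eq_bot hcover).compl_eq
  have hcut : ∀ i ∈ C₁, ∀ j ∉ C₁, ¬G.Adj i j := fun i hi j hj hij => by
    have hmeet : (T i ∩ T j).Nonempty :=
      ((hG i j).1 hij).2.elim (fun h => ⟨y j, h ▸ hyT j, hyT j⟩) id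
    exact (hΔ i hi j hj).not_ge
      (dist_le_two_mul_of_inter_nonempty (hdiam i) (hdiam j) (hyT i) (hyT j) hmeet)
  have hcard := G.card_connectedComponent_eq_two hconn₁ hconn₂ hcut
  obtain rfl : A = G.adjMatrix ℝ := Matrix.ext fun i j => hA i j
  rw [hD, G.diagonal_sum_adjMatrix_sub_adjMatrix,
    ← G.card_connectedComponent_eq_finrank_ker_toLin'_lapMatrix, ← Nat.card_eq_fintype_card]
  exact ⟨hcard, hcard⟩

/-- Under the two-cluster Delaunay separation hypotheses, the kernel of the
graph Laplacian `L = D − A` of the Delaunay adjacency graph `G` is two-dimensional;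
equivalently, `G` has exactly two connected components. -/
theorem kds_delaunay_laplacian_kernel_dim_two
    {d n : ℕ} (y : Fin n → EuclideanSpace ℝ (Fin d))
    (T : Fin n → Set (EuclideanSpace ℝ (Fin d))) (R : ℝ)
    (hyT : ∀ i, y i ∈ T i)
    (hdiam : ∀ i, ∀ u ∈ T i, ∀ v ∈ T i, dist u v ≤ R)
    (G : SimpleGraph (Fin n))
    (hG : ∀ i j, G.Adj i j ↔ i ≠ j ∧ (T i = T j ∨ (T i ∩ T j).Nonempty))
    (C₁ C₂ : Set (Fin n)) (hC₁ : C₁.Nonempty) (hC₂ : C₂.Nonempty)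
    (hdisj : Disjoint C₁ C₂) (hcover : C₁ ∪ C₂ = Set.univ)
    (hconn₁ : (G.induce C₁).Connected) (hconn₂ : (G.induce C₂).Connected)
    (hΔ : ∀ i ∈ C₁, ∀ j ∈ C₂, 2 * R < dist (y i) (y j))
    (A : Matrix (Fin n) (Fin n) ℝ)
    (hA : ∀ i j, A i j = if G.Adj i j then 1 else 0)
    (D : Matrix (Fin n) (Fin n) ℝ)
    (hD : D = Matrix.diagonal fun i => ∑ j, A i j) :
    Module.finrank ℝ (LinearMap.ker (Matrix.toLin' (D - A))) = 2 ∧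
      Nat.card G.ConnectedComponent = 2 :=
  kds_delaunay_laplacian_kernel_dim_two_general y T R hyT hdiam G hG C₁ C₂ hdisj hcover hconn₁
    hconn₂ hΔ A hA D hD
end

section
/- Let X be an m×n real matrix with nonnegative entries whose columns each sum to 1 (Σ_{j=1}^m X_{j i} = 1 for every i), let Q_A be a k×m real matrix, and define Q_Y := Q_A X (the harmonic extension). Let D_A be the m×m diagonal matrix whose j-th diagonal entry is Σ_{i=1}^n X_{j i}. Then Σ_{i=1}^n Σ_{j=1}^m X_{j i} ‖q_i − p_j‖² = trace(Q_A (D_A − X Xᵀ) Q_Aᵀ), where q_i is the i-th column of Q_Y and p_j the j-th column of Q_A. -/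
/-! Fix a coordinate `l`. The column `X_{·i}` has unit sum and `q_i` is the `X_{·i}`-weighted
mean of the `p_j`, so the inner sum `∑_j X_{ji} (q_i - p_j)²` is a weighted
variance, `∑_j X_{ji} p_j² - q_i²`. Summing over `i`, the first term becomes `pᵀ D_A p` and the
second `‖Xᵀ p‖² = pᵀ X Xᵀ p`; summing over `l` gives the trace. -/

open Matrix

theorem sum_mul_dotProduct_sub_sq {α R : Type*} [Fintype α] [CommRing R] (w p : α → R)
    (hw : ∑ j, w j = 1) :
    ∑ j, w j * (w ⬝ᵥ p - p j) ^ 2 = w ⬝ᵥ (p * p) - (w ⬝ᵥ p) ^ 2 := by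
  set q := w ⬝ᵥ p
  calc ∑ j, w j * (q - p j) ^ 2
      = (∑ j, w j) * q ^ 2 - 2 * q * (w ⬝ᵥ p) + w ⬝ᵥ (p * p) := by
        simp only [dotProduct, Pi.mul_apply, Finset.sum_mul, Finset.mul_sum,
          ← Finset.sum_sub_distrib, ← Finset.sum_add_distrib]
        exact Finset.sum_congr rfl fun j _ => by ring
    _ = w ⬝ᵥ (p * p) - q ^ 2 := by rw [hw]; ring

theorem sum_sum_mul_vecMul_sub_sq {α β R : Type*} [Fintype α] [Fintype β] [DecidableEq α]
    [CommRing R] (X : Matrix α β R) (hcol : ∀ i, ∑ j, X j i = 1) (p : α → R) :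
    ∑ i, ∑ j, X j i * ((p ᵥ* X) i - p j) ^ 2 =
      p ⬝ᵥ (diagonal (fun j => ∑ i, X j i) - X * Xᵀ) *ᵥ p := by
  have hdiag : p ⬝ᵥ diagonal (fun j => ∑ i, X j i) *ᵥ p = ∑ i, Xᵀ i ⬝ᵥ (p * p) := by
    simp only [dotProduct, mulVec_diagonal, Finset.sum_mul, Finset.mul_sum, transpose_apply,
      Pi.mul_apply]
    rw [Finset.sum_comm]
    exact Finset.sum_congr rfl fun j _ => Finset.sum_congr rfl fun i _ => by ring
  have hgram : p ⬝ᵥ (X * Xᵀ) *ᵥ p = ∑ i, (p ᵥ* X) i ^ 2 := by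
    rw [← mulVec_mulVec, dotProduct_mulVec, ← mulVec_transpose]
    simp only [dotProduct, sq]
  rw [sub_mulVec, dotProduct_sub, hdiag, hgram, ← Finset.sum_sub_distrib]
  refine Finset.sum_congr rfl fun i _ => ?_
  rw [← mulVec_transpose]
  exact sum_mul_dotProduct_sub_sq (Xᵀ i) p (hcol i)

theorem trace_mul_mul_transpose {ι α R : Type*} [Fintype ι] [Fintype α] [CommSemiring R]
    (A : Matrix ι α R) (M : Matrix α α R) :
    trace (A * M * Aᵀ) = ∑ l, A l ⬝ᵥ M *ᵥ A l := by
  simp only [trace, diag, mul_apply_eq_vecMul, vecMul_transpose, dotProduct_mulVec]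
  exact Finset.sum_congr rfl fun l _ => by simp only [mulVec, dotProduct_comm]

theorem harmonic_embedding_schur_quadratic_form_general
    {m n k : ℕ} (X : Matrix (Fin m) (Fin n) ℝ)
    (hcol : ∀ i, ∑ j, X j i = 1)
    (QA : Matrix (Fin k) (Fin m) ℝ)
    (QY : Matrix (Fin k) (Fin n) ℝ) (hQY : QY = QA * X)
    (DA : Matrix (Fin m) (Fin m) ℝ) (hDA : DA = Matrix.diagonal fun j => ∑ i, X j i) :
    ∑ i, ∑ j, X j i * (∑ l, (QY l i - QA l j) ^ 2) =
      Matrix.trace (QA * (DA - X * Xᵀ) * QAᵀ) := by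
  subst hQY hDA
  calc ∑ i, ∑ j, X j i * ∑ l, ((QA * X) l i - QA l j) ^ 2
      = ∑ l, ∑ i, ∑ j, X j i * ((QA l ᵥ* X) i - QA l j) ^ 2 := by
        simp only [Finset.mul_sum, mul_apply_eq_vecMul]
        exact Finset.sum_comm_cycle
    _ = trace (QA * (diagonal (fun j => ∑ i, X j i) - X * Xᵀ) * QAᵀ) := by
        simp only [trace_mul_mul_transpose, sum_sum_mul_vecMul_sub_sq X hcol]

/-- For a nonnegative coefficient matrix `X` with unit column sums and the
harmonic extension `Q_Y = Q_A X`, the bipartite Laplacian quadratic form reduces to the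
quadratic form of the Schur complement `D_A − X Xᵀ`. -/
theorem harmonic_embedding_schur_quadratic_form
    {m n k : ℕ} (X : Matrix (Fin m) (Fin n) ℝ)
    (hX : ∀ j i, 0 ≤ X j i)
    (hcol : ∀ i, ∑ j, X j i = 1)
    (QA : Matrix (Fin k) (Fin m) ℝ)
    (QY : Matrix (Fin k) (Fin n) ℝ) (hQY : QY = QA * X)
    (DA : Matrix (Fin m) (Fin m) ℝ) (hDA : DA = Matrix.diagonal fun j => ∑ i, X j i) :
    ∑ i, ∑ j, X j i * (∑ l, (QY l i - QA l j) ^ 2) =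
      Matrix.trace (QA * (DA - X * Xᵀ) * QAᵀ) :=
  harmonic_embedding_schur_quadratic_form_general X hcol QA QY hQY DA hDA
end

section
/- Let x ∈ ℝ^m. Then there exists b ∈ ℝ such that the vector p ∈ ℝ^m with coordinates p_j = max(x_j + b, 0) lies in the standard probability simplex and is the Euclidean projection of x onto the simplex, i.e. ‖x − p‖ ≤ ‖x − z‖ for every z in the standard probability simplex. -/
/-! The sum `∑ j, max (x j + b) 0` is continuous in `b`, vanishes for `b` very negative and is
at least `1` for `b` large, so some shift `b` makes `p = ReLU(x + b·𝟙)` a point of the simplex.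
This `p` satisfies the variational inequality `⟪x - p, z - p⟫ ≤ 0` for every `z` in the simplex:
coordinatewise `(x j - p j) (z j - p j) ≤ -b (z j - p j)`, and the right-hand sides sum to
`-b (1 - 1) = 0`. -/

open Finset

theorem norm_sub_le_norm_sub_of_inner_le_zero {E : Type*} [NormedAddCommGroup E]
    [InnerProductSpace ℝ E] {x p z : E} (h : inner ℝ (x - p) (z - p) ≤ 0) :
    ‖x - p‖ ≤ ‖x - z‖ := by
  have hsq : ‖x - z‖ ^ 2 = ‖x - p‖ ^ 2 - 2 * inner ℝ (x - p) (z - p) + ‖z - p‖ ^ 2 := by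
    rw [← norm_sub_sq_real, sub_sub_sub_cancel_right]
  rw [← pow_le_pow_iff_left₀ (norm_nonneg _) (norm_nonneg _) two_ne_zero, hsq]
  nlinarith [sq_nonneg ‖z - p‖]

theorem sub_max_add_mul_sub_le (a b z : ℝ) (hz : 0 ≤ z) :
    (a - max (a + b) 0) * (z - max (a + b) 0) ≤ -b * (z - max (a + b) 0) := by
  rcases le_total (a + b) 0 with h | h
  · rw [max_eq_right h]; nlinarith
  · rw [max_eq_left h]; exact le_of_eq (by ring)

theorem exists_sum_max_add_eq_one {ι : Type*} [Fintype ι] [Nonempty ι] (x : ι → ℝ) :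
    ∃ b, ∑ j, max (x j + b) 0 = 1 := by
  obtain ⟨M, hM⟩ := (Set.finite_range x).bddAbove
  have hxM : ∀ j, x j ≤ M := fun j => hM ⟨j, rfl⟩
  obtain ⟨i⟩ := ‹Nonempty ι›
  have hcont : Continuous fun b => ∑ j, max (x j + b) 0 := by fun_prop
  have hlow : ∑ j, max (x j + -M) 0 = 0 :=
    sum_eq_zero fun j _ => max_eq_right (by linarith [hxM j])
  have hhigh : 1 ≤ ∑ j, max (x j + (1 - x i)) 0 :=
    calc (1 : ℝ) ≤ max (x i + (1 - x i)) 0 := le_max_of_le_left (by linarith)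
      _ ≤ ∑ j, max (x j + (1 - x i)) 0 :=
        single_le_sum (f := fun j => max (x j + (1 - x i)) 0)
          (fun _ _ => le_max_right _ _) (mem_univ i)
  obtain ⟨b, -, hb⟩ := intermediate_value_Icc (by linarith [hxM i] : -M ≤ 1 - x i)
    hcont.continuousOn ⟨hlow.trans_le zero_le_one, hhigh⟩
  exact ⟨b, hb⟩

theorem sum_sub_max_add_mul_sub_nonpos {ι : Type*} [Fintype ι] (x z : ι → ℝ) (b : ℝ)
    (hp : ∑ j, max (x j + b) 0 = 1) (hz : ∀ j, 0 ≤ z j) (hz₁ : ∑ j, z j = 1) :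
    ∑ j, (x j - max (x j + b) 0) * (z j - max (x j + b) 0) ≤ 0 :=
  calc ∑ j, (x j - max (x j + b) 0) * (z j - max (x j + b) 0)
      ≤ ∑ j, -b * (z j - max (x j + b) 0) :=
        sum_le_sum fun j _ => sub_max_add_mul_sub_le (x j) b (z j) (hz j)
    _ = 0 := by rw [← mul_sum, sum_sub_distrib, hp, hz₁, sub_self, mul_zero]

/-- The Euclidean projection of `x ∈ ℝ^m` onto the standard probability
simplex has the form `p_j = max (x_j + b, 0)` for some scalar shift `b`: there exists
`b ∈ ℝ` such that the vector `p = ReLU(x + b·𝟙)` lies in the simplex and satisfies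
`‖x − p‖ ≤ ‖x − z‖` for every `z` in the simplex. -/
theorem simplex_projection_is_shifted_relu
    {m : ℕ} (hm : 0 < m) (x : EuclideanSpace ℝ (Fin m)) :
    ∃ b : ℝ, ∃ p : EuclideanSpace ℝ (Fin m),
      (∀ j, p j = max (x j + b) 0) ∧
      (∀ j, 0 ≤ p j) ∧ (∑ j, p j = 1) ∧
      ∀ z : EuclideanSpace ℝ (Fin m),
        (∀ j, 0 ≤ z j) → (∑ j, z j = 1) → ‖x - p‖ ≤ ‖x - z‖ := by
  have : Nonempty (Fin m) := ⟨⟨0, hm⟩⟩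
  obtain ⟨b, hb⟩ := exists_sum_max_add_eq_one x
  refine ⟨b, WithLp.toLp 2 fun j => max (x j + b) 0, fun _ => rfl, fun _ => le_max_right _ _,
    hb, fun z hz hz₁ => norm_sub_le_norm_sub_of_inner_le_zero ?_⟩
  have hinner := sum_sub_max_add_mul_sub_nonpos x z b hb hz hz₁
  simpa [PiLp.inner_apply, mul_comm] using hinner
end
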